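/- Assume (f4) and (f5). Then for all σ, l, t > 0, all c ∈ ℝⁿ and each component i ∈ {1,…,n}: v_i((σ+l)t; (σ+l)c) ≤ v_i(σt; σc) + v_i(lt; lc) + 2(‖f_i‖_∞ + C₀ + 1). -/

import Mathlib

/-!
Solutions of a Lipschitz ODE are unique, so integer periodicity of `f` makes the flow commute
with lattice translations of the initial value and lets it be restarted at integer times. By (f5),
comparing with a lattice translate shows that two solutions at the same time differ in a component
by at most the initial difference plus `C₀ + 1`. Run the solution from `(σ + l) c` up to the
integer time `k = ⌈σ t⌉`, compare it there with the solution from `σ c`, restart it at time `k`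
and compare the rest with the solution from `l c`; the two comparisons cost `2 (C₀ + 1)`, and
moving the times `σ t` and `(σ + l) t` by less than one costs at most `2 ‖f_i‖_∞`.
-/

open Set

section Flow

variable {E : Type*} [NormedAddCommGroup E] [NormedSpace ℝ E] {K : NNReal}
  {f : E → ℝ → E} {v : E → ℝ → E}

theorem eq_flow_of_hasDerivAt (hf : ∀ τ, LipschitzWith K (f · τ))
    (hv : ∀ c τ, HasDerivAt (v c) (f (v c τ) τ) τ) (hv0 : ∀ c, v c 0 = c)
    {u : ℝ → E} (hu : ∀ τ, HasDerivAt u (f (u τ) τ) τ) : u = v (u 0) :=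
  ODE_solution_unique_univ (v := fun τ r => f r τ) (s := fun _ => univ) (t₀ := 0)
    (fun τ => (hf τ).lipschitzOnWith) (fun τ => ⟨hu τ, trivial⟩)
    (fun τ => ⟨hv _ τ, trivial⟩) (hv0 _).symm

theorem flow_add_of_forall_add_eq (hf : ∀ τ, LipschitzWith K (f · τ))
    (hv : ∀ c τ, HasDerivAt (v c) (f (v c τ) τ) τ) (hv0 : ∀ c, v c 0 = c)
    {p : E} (hp : ∀ r τ, f (r + p) τ = f r τ) (a : E) :
    v (a + p) = fun τ => v a τ + p := by
  have hu : ∀ τ, HasDerivAt (fun τ => v a τ + p) (f (v a τ + p) τ) τ := fun τ => by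
    rw [hp]
    exact (hv a τ).add_const p
  simpa [hv0] using (eq_flow_of_hasDerivAt hf hv hv0 hu).symm

theorem flow_add_time_of_forall_add_eq (hf : ∀ τ, LipschitzWith K (f · τ))
    (hv : ∀ c τ, HasDerivAt (v c) (f (v c τ) τ) τ) (hv0 : ∀ c, v c 0 = c)
    {s : ℝ} (hs : ∀ r τ, f r (τ + s) = f r τ) (a : E) (τ : ℝ) :
    v a (τ + s) = v (v a s) τ := by
  have hu : ∀ τ, HasDerivAt (fun τ => v a (τ + s)) (f (v a (τ + s)) τ) τ := fun τ => by
    rw [← hs]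
    simpa using (hv a (τ + s)).comp_add_const τ s
  simpa using congrFun (eq_flow_of_hasDerivAt hf hv hv0 hu) τ

end Flow

theorem le_add_of_abs_deriv_le {g g' : ℝ → ℝ} {M : ℝ} (hg : ∀ τ, HasDerivAt g (g' τ) τ)
    (hM : ∀ τ, |g' τ| ≤ M) {s τ : ℝ} (hsτ : |τ - s| ≤ 1) : g τ ≤ g s + M := by
  have hM0 : 0 ≤ M := (abs_nonneg _).trans (hM 0)
  have hlip : |g τ - g s| ≤ M * |τ - s| := by
    simpa [Real.norm_eq_abs] using convex_univ.norm_image_sub_le_of_norm_hasDerivWithin_le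
      (fun x _ => (hg x).hasDerivWithinAt) (fun x _ => by simpa using hM x)
      (mem_univ s) (mem_univ τ)
  nlinarith [le_abs_self (g τ - g s), mul_le_mul_of_nonneg_left hsτ hM0]

theorem flow_apply_sub_flow_apply_le {ι : Type*} {v : (ι → ℝ) → ℝ → (ι → ℝ)} {C₀ T : ℝ}
    (htrans : ∀ a (m : ι → ℤ), v (a + fun j => (m j : ℝ)) = fun τ => v a τ + fun j => (m j : ℝ))
    (hC₀ : ∀ c₁ c₂ : ι → ℝ, c₁ - c₂ ∈ Icc 0 1 → ∀ i, ∀ τ > (0 : ℝ), v c₂ τ i - v c₁ τ i ≤ C₀)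
    (hT : 0 < T) (a c : ι → ℝ) (i : ι) :
    v a T i - v c T i ≤ (a i - c i) + C₀ + 1 := by
  set m : ι → ℤ := fun j => ⌈a j - c j⌉
  have hmem : (c + fun j => (m j : ℝ)) - a ∈ Icc 0 1 := by
    refine ⟨fun j => ?_, fun j => ?_⟩ <;> simp only [Pi.sub_apply, Pi.add_apply, Pi.zero_apply,
      Pi.one_apply, m]
    · linarith [Int.le_ceil (a j - c j)]
    · linarith [Int.ceil_lt_add_one (a j - c j)]
  have h := hC₀ _ _ hmem i T hT
  rw [htrans] at h
  simp only [Pi.add_apply] at h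
  linarith [Int.ceil_lt_add_one (a i - c i)]

theorem stmt_18_general
    (n : ℕ)
    (f : (Fin n → ℝ) → ℝ → (Fin n → ℝ)) (κ : ℝ)
    (hlip : ∀ r₁ τ₁ r₂ τ₂, ‖f r₁ τ₁ - f r₂ τ₂‖ ≤ κ * (‖r₁ - r₂‖ + |τ₁ - τ₂|))
    (hper : ∀ (r : Fin n → ℝ) (τ : ℝ) (l : Fin n → ℤ) (k : ℤ),
      f (r + fun i => (l i : ℝ)) (τ + k) = f r τ)
    (M : Fin n → ℝ) (hM : ∀ r τ i, |f r τ i| ≤ M i)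
    (v : (Fin n → ℝ) → ℝ → (Fin n → ℝ))
    (hv0 : ∀ c, v c 0 = c)
    (hv : ∀ c τ, HasDerivAt (v c) (f (v c τ) τ) τ)
    (C₀ : ℝ)
    (hf5 : ∀ c₁ c₂ : Fin n → ℝ, c₁ - c₂ ∈ Set.Icc (0 : Fin n → ℝ) 1 →
      ∀ i, ∀ τ > (0 : ℝ), v c₂ τ i - v c₁ τ i ≤ C₀) :
    ∀ σ > (0 : ℝ), ∀ l > (0 : ℝ), ∀ t > (0 : ℝ), ∀ c : Fin n → ℝ, ∀ i,
      v ((σ + l) • c) ((σ + l) * t) i ≤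
        v (σ • c) (σ * t) i + v (l • c) (l * t) i + 2 * (M i + C₀ + 1) := by
  intro σ hσ l hl t ht c i
  have hf : ∀ τ, LipschitzWith κ.toNNReal (f · τ) := fun τ =>
    LipschitzWith.of_dist_le' fun r₁ r₂ => by simpa [dist_eq_norm] using hlip r₁ τ r₂ τ
  have hspread : ∀ a b T, 0 < T → v a T i - v b T i ≤ (a i - b i) + C₀ + 1 :=
    fun a b T hT => flow_apply_sub_flow_apply_le
      (fun a m => flow_add_of_forall_add_eq hf hv hv0 (fun r τ => by simpa using hper r τ m 0) a)
      hf5 hT a b i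
  have hdrift : ∀ a s τ, |τ - s| ≤ 1 → v a τ i ≤ v a s i + M i := fun a s τ =>
    le_add_of_abs_deriv_le (fun τ => hasDerivAt_pi.mp (hv a τ) i) (fun τ => hM _ τ i)
  set k : ℤ := ⌈σ * t⌉
  have hk : σ * t ≤ k ∧ (k : ℝ) < σ * t + 1 := ⟨Int.le_ceil _, Int.ceil_lt_add_one _⟩
  have hrestart : v ((σ + l) • c) (l * t + k) = v (v ((σ + l) • c) k) (l * t) :=
    flow_add_time_of_forall_add_eq hf hv hv0
      (fun r τ => by simpa [← Pi.zero_def] using hper r τ 0 k) _ _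
  have h₁ := hdrift ((σ + l) • c) (l * t + k) ((σ + l) * t)
    (by rw [abs_le]; constructor <;> nlinarith)
  have h₂ := hspread (v ((σ + l) • c) k) (l • c) (l * t) (by positivity)
  have h₃ := hspread ((σ + l) • c) (σ • c) k (by linarith [mul_pos hσ ht])
  have h₄ := hdrift (σ • c) (σ * t) k (by rw [abs_le]; constructor <;> linarith)
  simp only [hrestart, Pi.smul_apply, smul_eq_mul] at h₁ h₂ h₃
  linarith

/-- Approximate componentwise subadditivity under (f4) and (f5):
`v_i((σ+l)t; (σ+l)c) ≤ v_i(σt; σc) + v_i(lt; lc) + 2(‖f_i‖_∞ + C₀ + 1)`. -/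
theorem stmt_18
    (n : ℕ) (hn : 1 < n)
    (f : (Fin n → ℝ) → ℝ → (Fin n → ℝ)) (κ : ℝ)
    (hcont : Continuous fun p : (Fin n → ℝ) × ℝ => f p.1 p.2)
    (hlip : ∀ r₁ τ₁ r₂ τ₂, ‖f r₁ τ₁ - f r₂ τ₂‖ ≤ κ * (‖r₁ - r₂‖ + |τ₁ - τ₂|))
    (hper : ∀ (r : Fin n → ℝ) (τ : ℝ) (l : Fin n → ℤ) (k : ℤ),
      f (r + fun i => (l i : ℝ)) (τ + k) = f r τ)
    (M : Fin n → ℝ) (hM : ∀ r τ i, |f r τ i| ≤ M i)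
    (v : (Fin n → ℝ) → ℝ → (Fin n → ℝ))
    (hv0 : ∀ c, v c 0 = c)
    (hv : ∀ c τ, HasDerivAt (v c) (f (v c τ) τ) τ)
    (C₀ : ℝ) (hC₀ : 0 < C₀)
    (hf5 : ∀ c₁ c₂ : Fin n → ℝ, c₁ - c₂ ∈ Set.Icc (0 : Fin n → ℝ) 1 →
      ∀ i, ∀ τ > (0 : ℝ), v c₂ τ i - v c₁ τ i ≤ C₀) :
    ∀ σ > (0 : ℝ), ∀ l > (0 : ℝ), ∀ t > (0 : ℝ), ∀ c : Fin n → ℝ, ∀ i,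
      v ((σ + l) • c) ((σ + l) * t) i ≤
        v (σ • c) (σ * t) i + v (l • c) (l * t) i + 2 * (M i + C₀ + 1) :=
  stmt_18_general n f κ hlip hper M hM v hv0 hv C₀ hf5
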